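/- Let φ ∈ BW_n and ψ ∈ BW_m be proportionally minimal vectors on the Barnes Wall lattices. Then φ ⊗ ψ is proportionally minimal in BW_{n+m}; consequently the Barnes Wall norm is multiplicative: N(φ⊗ψ) = N(φ)·N(ψ) whenever both are finite. -/

import Mathlib

/-!
Write `φ = ∑ a x • x̃` and `ψ = ∑ b y • ỹ` with Gaussian integer coefficients; then `φ ⊗ ψ` has
coefficients `a x * b y` on the generators of `BW_{n+m}`, and these coefficients are unique.
Proportional minimality of `φ` says that no Gaussian prime divides all `a x` (else `φ / p` would
lie on the lattice), and this passes to the products `a x * b y` since a prime dividing all of them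
divides all `a x` once it misses some `b y`. If `c • (φ ⊗ ψ)` lies on the lattice, then
`c * a x * b y ∈ ℤ[i]` for all `x, y`, and a family without common prime factor forces `c ∈ ℤ[i]`,
hence `‖c‖ ≥ 1`. Finally `N(φ) = ‖φ‖²` for proportionally minimal `φ`, and `‖φ ⊗ ψ‖ = ‖φ‖ ‖ψ‖`.
-/

/-- Generator `|x̃⟩` of the Barnes Wall lattice: the tensor product of `|0⟩`
(where `x i = false`) and `(1/(1+i))(|0⟩+|1⟩)` (where `x i = true`). -/
noncomputable def bwGen (n : ℕ) (x : Fin n → Bool) :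
    EuclideanSpace ℂ (Fin n → Fin 2) :=
  WithLp.toLp 2 (fun y => ∏ i : Fin n,
    (if x i then (1 + Complex.I)⁻¹ else if y i = 0 then 1 else 0))

/-- Membership in the Barnes Wall lattice `BW_n`: the `ℤ[i]`-span of the `bwGen n x`. -/
def memBW (n : ℕ) (v : EuclideanSpace ℂ (Fin n → Fin 2)) : Prop :=
  ∃ a : (Fin n → Bool) → GaussianInt,
    v = ∑ x : Fin n → Bool, (GaussianInt.toComplex (a x)) • bwGen n x

/-- A vector of `BW_n` is proportionally minimal if no strictly shorter
nonzero multiple of it lies on the lattice. -/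
def PropMinimal (n : ℕ) (φ : EuclideanSpace ℂ (Fin n → Fin 2)) : Prop :=
  memBW n φ ∧ ∀ c : ℂ, c ≠ 0 → ‖c‖ < 1 → ¬ memBW n (c • φ)

/-- The Barnes Wall norm `N(φ)`. -/
noncomputable def bwNorm (n : ℕ) (φ : EuclideanSpace ℂ (Fin n → Fin 2)) : ℝ :=
  sInf {r : ℝ | ∃ c : ℂ, c ≠ 0 ∧ memBW n (c • φ) ∧ r = ‖c • φ‖ ^ 2}

/-- Tensor product of vectors in `ℂ^{2^n}` and `ℂ^{2^m}`. -/
noncomputable def bwTprod {n m : ℕ} (φ : EuclideanSpace ℂ (Fin n → Fin 2))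
    (ψ : EuclideanSpace ℂ (Fin m → Fin 2)) :
    EuclideanSpace ℂ (Fin (n + m) → Fin 2) :=
  WithLp.toLp 2 (fun z => φ (fun i => z (Fin.castAdd m i)) * ψ (fun j => z (Fin.natAdd n j)))

def NoCommonPrimeFactor {ι R : Type*} [CommMonoidWithZero R] (a : ι → R) : Prop :=
  ∀ p : R, Prime p → ∃ i, ¬ p ∣ a i

namespace NoCommonPrimeFactor

variable {ι κ R : Type*}

theorem exists_ne_zero [CommMonoidWithZero R] {a : ι → R} (ha : NoCommonPrimeFactor a)
    {p : R} (hp : Prime p) : ∃ i, a i ≠ 0 := by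
  obtain ⟨i, hi⟩ := ha p hp
  exact ⟨i, fun h => hi (h ▸ dvd_zero p)⟩

theorem mul [CommMonoidWithZero R] {a : ι → R} {b : κ → R} (ha : NoCommonPrimeFactor a)
    (hb : NoCommonPrimeFactor b) : NoCommonPrimeFactor fun z : ι × κ => a z.1 * b z.2 := by
  intro p hp
  obtain ⟨i, hi⟩ := ha p hp
  obtain ⟨j, hj⟩ := hb p hp
  exact ⟨(i, j), fun h => (hp.dvd_or_dvd h).elim hi hj⟩

-- Peel off the prime factors `p` of `q` one at a time: `p ∣ g` because `p` misses some `a i`.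
theorem dvd_of_forall_dvd_mul [CommMonoidWithZero R] [UniqueFactorizationMonoid R] {a : ι → R}
    (ha : NoCommonPrimeFactor a) {q g : R} (hq : q ≠ 0) (hdvd : ∀ i, q ∣ g * a i) : q ∣ g := by
  induction q using UniqueFactorizationMonoid.induction_on_prime generalizing g with
  | h₁ => exact absurd rfl hq
  | h₂ q hu => exact hu.dvd
  | h₃ q p hq0 hp ih =>
    obtain ⟨i, hi⟩ := ha p hp
    obtain ⟨g', rfl⟩ : p ∣ g :=
      (hp.dvd_or_dvd ((dvd_mul_right p q).trans (hdvd i))).resolve_right hi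
    refine mul_dvd_mul_left p (ih hq0 fun j => ?_)
    exact (mul_dvd_mul_iff_left hp.ne_zero).1 (by simpa only [mul_assoc] using hdvd j)

theorem mem_range_of_forall_mul_mem_range [CommRing R] [IsDomain R]
    [UniqueFactorizationMonoid R] {K : Type*} [Field K] {f : R →+* K}
    (hf : Function.Injective f) {a : ι → R} (ha : NoCommonPrimeFactor a) {i : ι} (hi : a i ≠ 0)
    {c : K} (hc : ∀ j, c * f (a j) ∈ Set.range f) : c ∈ Set.range f := by
  choose g hg using hc
  have hfi : f (a i) ≠ 0 := (map_ne_zero_iff f hf).2 hi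
  obtain ⟨w, hw⟩ : a i ∣ g i := ha.dvd_of_forall_dvd_mul hi fun j =>
    ⟨g j, hf <| by simp only [map_mul, hg]; ring⟩
  refine ⟨w, mul_right_cancel₀ hfi ?_⟩
  rw [← hg i, hw, map_mul, mul_comm]

end NoCommonPrimeFactor

-- `⟨0| - ⟨1|` and `(1 + i)⟨1|` form the basis dual to `|0⟩`, `(|0⟩ + |1⟩)/(1 + i)`.
noncomputable def bwDualEntry (b : Bool) (t : Fin 2) : ℂ :=
  if b then (if t = 0 then 0 else 1 + Complex.I) else (if t = 0 then 1 else -1)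

noncomputable def bwCoord (n : ℕ) (x : Fin n → Bool) :
    EuclideanSpace ℂ (Fin n → Fin 2) →ₗ[ℂ] ℂ :=
  ∑ y : Fin n → Fin 2, (∏ i, bwDualEntry (x i) (y i)) • EuclideanSpace.projₗ y

theorem bwCoord_apply (n : ℕ) (x : Fin n → Bool) (v : EuclideanSpace ℂ (Fin n → Fin 2)) :
    bwCoord n x v = ∑ y : Fin n → Fin 2, (∏ i, bwDualEntry (x i) (y i)) * v y := by
  simp [bwCoord]

theorem sum_bwDualEntry_mul (b b' : Bool) :
    ∑ t : Fin 2, bwDualEntry b t * (if b' then (1 + Complex.I)⁻¹ else if t = 0 then 1 else 0) =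
      if b' = b then 1 else 0 := by
  have : (1 + Complex.I) ≠ 0 := by simp [Complex.ext_iff]
  cases b <;> cases b' <;> simp [bwDualEntry, Fin.sum_univ_two, this]

theorem bwCoord_bwGen (n : ℕ) (x x' : Fin n → Bool) :
    bwCoord n x (bwGen n x') = if x' = x then 1 else 0 := by
  simp only [bwCoord_apply, bwGen, ← Finset.prod_mul_distrib]
  rw [← Fintype.prod_sum (fun i t => bwDualEntry (x i) t *
    (if x' i then (1 + Complex.I)⁻¹ else if t = 0 then 1 else 0))]
  simp only [sum_bwDualEntry_mul, Finset.prod_ite_zero, Finset.prod_const_one, funext_iff]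
  simp

theorem bwCoord_sum_smul_bwGen (n : ℕ) (g : (Fin n → Bool) → ℂ) (x : Fin n → Bool) :
    bwCoord n x (∑ x', g x' • bwGen n x') = g x := by
  simp [map_sum, bwCoord_bwGen]

section Tensor

variable {n m : ℕ}

noncomputable def bwTprodBilin :
    EuclideanSpace ℂ (Fin n → Fin 2) →ₗ[ℂ] EuclideanSpace ℂ (Fin m → Fin 2) →ₗ[ℂ]
      EuclideanSpace ℂ (Fin (n + m) → Fin 2) :=
  LinearMap.mk₂ ℂ bwTprod
    (fun _ _ _ => by ext; simp [bwTprod, add_mul])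
    (fun _ _ _ => by ext; simp [bwTprod, mul_assoc])
    (fun _ _ _ => by ext; simp [bwTprod, mul_add])
    (fun _ _ _ => by ext; simp [bwTprod, mul_left_comm])

theorem bwTprod_apply_append (φ : EuclideanSpace ℂ (Fin n → Fin 2))
    (ψ : EuclideanSpace ℂ (Fin m → Fin 2)) (u : Fin n → Fin 2) (v : Fin m → Fin 2) :
    bwTprod φ ψ (Fin.append u v) = φ u * ψ v := by
  simp [bwTprod]

theorem bwTprod_bwGen (x : Fin n → Bool) (y : Fin m → Bool) :
    bwTprod (bwGen n x) (bwGen m y) = bwGen (n + m) (Fin.append x y) := by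
  ext w
  simp [bwTprod, bwGen, Fin.prod_univ_add]

theorem bwTprod_sum_smul_bwGen (f : (Fin n → Bool) → ℂ) (g : (Fin m → Bool) → ℂ) :
    bwTprod (∑ x, f x • bwGen n x) (∑ y, g y • bwGen m y) =
      ∑ z : Fin (n + m) → Bool,
        (f (fun i => z (Fin.castAdd m i)) * g (fun j => z (Fin.natAdd n j))) •
          bwGen (n + m) z := by
  change bwTprodBilin _ _ = _
  simp only [map_sum, LinearMap.sum_apply, map_smul, LinearMap.smul_apply, Finset.smul_sum,
    smul_smul, bwTprodBilin, LinearMap.mk₂_apply, bwTprod_bwGen]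
  rw [Finset.sum_comm, ← (Fin.appendEquiv n m).sum_comp, Fintype.sum_prod_type]
  simp only [Fin.appendEquiv_apply, Fin.append_left, Fin.append_right, mul_comm]
  rfl

theorem norm_bwTprod (φ : EuclideanSpace ℂ (Fin n → Fin 2))
    (ψ : EuclideanSpace ℂ (Fin m → Fin 2)) : ‖bwTprod φ ψ‖ = ‖φ‖ * ‖ψ‖ := by
  rw [← sq_eq_sq₀ (norm_nonneg _) (by positivity), mul_pow, EuclideanSpace.norm_sq_eq,
    EuclideanSpace.norm_sq_eq, EuclideanSpace.norm_sq_eq, ← (Fin.appendEquiv n m).sum_comp,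
    Fintype.sum_prod_type, Finset.sum_mul_sum]
  refine Finset.sum_congr rfl fun u _ => Finset.sum_congr rfl fun v _ => ?_
  rw [← mul_pow, ← norm_mul, ← bwTprod_apply_append]
  rfl

theorem memBW_bwTprod {φ : EuclideanSpace ℂ (Fin n → Fin 2)}
    {ψ : EuclideanSpace ℂ (Fin m → Fin 2)} (hφ : memBW n φ) (hψ : memBW m ψ) :
    memBW (n + m) (bwTprod φ ψ) := by
  obtain ⟨a, rfl⟩ := hφ
  obtain ⟨b, rfl⟩ := hψ
  exact ⟨fun z => a (fun i => z (Fin.castAdd m i)) * b (fun j => z (Fin.natAdd n j)),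
    by simp [bwTprod_sum_smul_bwGen]⟩

end Tensor

namespace GaussianInt

theorem one_le_norm_toComplex {g : GaussianInt} (hg : g ≠ 0) : 1 ≤ ‖toComplex g‖ := by
  rw [← Complex.one_le_normSq_iff, ← intCast_real_norm]
  exact_mod_cast norm_pos.2 hg

theorem one_lt_norm_toComplex {g : GaussianInt} (hg : g ≠ 0) (hu : ¬IsUnit g) :
    1 < ‖toComplex g‖ := by
  rw [← Complex.one_lt_normSq_iff, ← intCast_real_norm]
  have h1 : g.norm ≠ 1 := fun h => hu ((Zsqrtd.norm_eq_one_iff' (by norm_num) g).1 h)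
  exact_mod_cast lt_of_le_of_ne (norm_pos.2 hg) h1.symm

theorem prime_three : Prime (3 : GaussianInt) := by
  exact_mod_cast prime_of_nat_prime_of_mod_four_eq_three 3 rfl

end GaussianInt

namespace PropMinimal

variable {n m : ℕ} {φ : EuclideanSpace ℂ (Fin n → Fin 2)} {ψ : EuclideanSpace ℂ (Fin m → Fin 2)}

theorem noCommonPrimeFactor (h : PropMinimal n φ) {a : (Fin n → Bool) → GaussianInt}
    (ha : φ = ∑ x, GaussianInt.toComplex (a x) • bwGen n x) : NoCommonPrimeFactor a := by
  intro p hp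
  by_contra! hdvd
  choose d hd using hdvd
  have hp0 : GaussianInt.toComplex p ≠ 0 := by simpa using hp.ne_zero
  refine h.2 (GaussianInt.toComplex p)⁻¹ (inv_ne_zero hp0) ?_ ⟨d, ?_⟩
  · rw [norm_inv]
    exact inv_lt_one_of_one_lt₀ (GaussianInt.one_lt_norm_toComplex hp.ne_zero hp.not_isUnit)
  · simp [ha, Finset.smul_sum, smul_smul, hd, hp0]

theorem tprod (hφ : PropMinimal n φ) (hψ : PropMinimal m ψ) :
    PropMinimal (n + m) (bwTprod φ ψ) := by
  refine ⟨memBW_bwTprod hφ.1 hψ.1, fun c hc hc1 hmem => ?_⟩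
  obtain ⟨a, ha⟩ := hφ.1
  obtain ⟨b, hb⟩ := hψ.1
  obtain ⟨A, hA⟩ := hmem
  have hab := (hφ.noCommonPrimeFactor ha).mul (hψ.noCommonPrimeFactor hb)
  have hcoeff : ∀ p : (Fin n → Bool) × (Fin m → Bool),
      c * GaussianInt.toComplex (a p.1 * b p.2) =
        GaussianInt.toComplex (A (Fin.append p.1 p.2)) := by
    rintro ⟨x, y⟩
    have h := congrArg (bwCoord (n + m) (Fin.append x y)) hA
    rw [ha, hb, bwTprod_sum_smul_bwGen, map_smul, bwCoord_sum_smul_bwGen,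
      bwCoord_sum_smul_bwGen] at h
    simpa [Fin.append_left, Fin.append_right, mul_assoc] using h
  obtain ⟨p, hp⟩ := hab.exists_ne_zero GaussianInt.prime_three
  obtain ⟨w, rfl⟩ := hab.mem_range_of_forall_mul_mem_range GaussianInt.toComplex_injective hp
    fun p => ⟨_, (hcoeff p).symm⟩
  have hw : w ≠ 0 := by rintro rfl; exact hc (map_zero _)
  exact hc1.not_ge (GaussianInt.one_le_norm_toComplex hw)

theorem bwNorm_eq (h : PropMinimal n φ) : bwNorm n φ = ‖φ‖ ^ 2 := by
  have hmem : ‖φ‖ ^ 2 ∈ {r : ℝ | ∃ c : ℂ, c ≠ 0 ∧ memBW n (c • φ) ∧ r = ‖c • φ‖ ^ 2} :=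
    ⟨1, one_ne_zero, by simpa using h.1, by simp⟩
  refine le_antisymm (csInf_le ⟨0, ?_⟩ hmem) (le_csInf ⟨_, hmem⟩ ?_)
  · rintro r ⟨c, -, -, rfl⟩
    positivity
  · rintro r ⟨c, hc0, hc, rfl⟩
    have h1 : 1 ≤ ‖c‖ := not_lt.1 fun hlt => h.2 c hc0 hlt hc
    rw [norm_smul, mul_pow]
    exact le_mul_of_one_le_left (by positivity) (one_le_pow₀ h1)

end PropMinimal

theorem stmt_13 (n m : ℕ) (φ : EuclideanSpace ℂ (Fin n → Fin 2))
    (ψ : EuclideanSpace ℂ (Fin m → Fin 2))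
    (hφ : PropMinimal n φ) (hψ : PropMinimal m ψ) :
    PropMinimal (n + m) (bwTprod φ ψ) ∧
      bwNorm (n + m) (bwTprod φ ψ) = bwNorm n φ * bwNorm m ψ := by
  have hT := hφ.tprod hψ
  refine ⟨hT, ?_⟩
  rw [hT.bwNorm_eq, hφ.bwNorm_eq, hψ.bwNorm_eq, norm_bwTprod, mul_pow]
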